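/- arXiv:1809.10408 — 5 statements merged into one kernel-verified Lean document; each statement's English description precedes it below -/
import Mathlib

section
/- Let G be a group and R, S, T subgroups of G × G each containing the diagonal, and suppose R ⊓ S ≤ T (every pair lying in both R and S lies in T). Then the shifting property holds: for all x, y, u, v ∈ G, if (x, y) ∈ R, (x, y) ∈ T, (x, u) ∈ S, (y, v) ∈ S and (u, v) ∈ R, then (u, v) ∈ T. -/
/-!
Subgroups are closed under the Mal'tsev term `p(a, b, c) = a * b⁻¹ * c`. Applying it in `R` to
`(u, v), (x, y), (y, y)` and in `S` to `(u, u), (x, u), (y, v)` puts `(u * x⁻¹ * y, v)` in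
`R ⊓ S ≤ T`; applying it in `T` to this pair, `(y, y)` and `(x, y)` returns `(u, v)`.
-/

theorem Subgroup.prodMk_mul_inv_mul_mem {G : Type*} [Group G] (H : Subgroup (G × G))
    {a₁ a₂ b₁ b₂ c₁ c₂ : G} (ha : (a₁, a₂) ∈ H) (hb : (b₁, b₂) ∈ H) (hc : (c₁, c₂) ∈ H) :
    (a₁ * b₁⁻¹ * c₁, a₂ * b₂⁻¹ * c₂) ∈ H :=
  H.mul_mem (H.mul_mem ha (H.inv_mem hb)) hc

/-- The Shifting Lemma in the category of groups for reflexive internal relations. -/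
theorem shifting_lemma_subgroups {G : Type*} [Group G]
    (R S T : Subgroup (G × G))
    (hR : ∀ g : G, (g, g) ∈ R) (hS : ∀ g : G, (g, g) ∈ S) (hT : ∀ g : G, (g, g) ∈ T)
    (hRS : R ⊓ S ≤ T) :
    ∀ x y u v : G, (x, y) ∈ R → (x, y) ∈ T → (x, u) ∈ S → (y, v) ∈ S →
      (u, v) ∈ R → (u, v) ∈ T := by
  intro x y u v hRxy hTxy hSxu hSyv hRuv
  have hqR : (u * x⁻¹ * y, v) ∈ R := by
    simpa only [inv_mul_cancel_right] using R.prodMk_mul_inv_mul_mem hRuv hRxy (hR y)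
  have hqS : (u * x⁻¹ * y, v) ∈ S := by
    simpa only [mul_inv_cancel, one_mul] using S.prodMk_mul_inv_mul_mem (hS u) hSxu hSyv
  have hqT : (u * x⁻¹ * y, v) ∈ T := hRS ⟨hqR, hqS⟩
  simpa only [mul_inv_cancel_right, inv_mul_cancel_right] using T.prodMk_mul_inv_mul_mem hqT (hT y) hTxy
end

section
/- Let G and K be groups and D a subgroup of G × K. Then DD°DD° = DD° as relations on G: for all x, x' ∈ G, (∃ z ∈ G, ∃ y y' ∈ K, (x, y) ∈ D ∧ (z, y) ∈ D ∧ (z, y') ∈ D ∧ (x', y') ∈ D) if and only if (∃ y ∈ K, (x, y) ∈ D ∧ (x', y) ∈ D). -/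
theorem Subgroup.mul_inv_mul_mem {H : Type*} [Group H] (D : Subgroup H) {a b c : H}
    (ha : a ∈ D) (hb : b ∈ D) (hc : c ∈ D) : a * b⁻¹ * c ∈ D :=
  D.mul_mem (D.mul_mem ha (D.inv_mem hb)) hc

/-- `DD°DD° = DD°` for any internal relation `D` between groups. -/
theorem subgroup_relation_DDop_idem {G K : Type*} [Group G] [Group K]
    (D : Subgroup (G × K)) :
    ∀ x x' : G,
      (∃ z : G, ∃ y y' : K, (x, y) ∈ D ∧ (z, y) ∈ D ∧ (z, y') ∈ D ∧ (x', y') ∈ D) ↔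
        (∃ y : K, (x, y) ∈ D ∧ (x', y) ∈ D) := by
  intro x x'
  constructor
  · rintro ⟨z, y, y', hxy, hzy, hzy', hx'y'⟩
    -- `(x, y) (z, y)⁻¹ (z, y') = (x, y')`
    have hxy' : (x, y') ∈ D := by simpa using D.mul_inv_mul_mem hxy hzy hzy'
    exact ⟨y', hxy', hx'y'⟩
  · rintro ⟨y, hxy, hx'y⟩
    exact ⟨x, y, y, hxy, hxy, hxy, hx'y⟩
end

section
/- Let G be a group and R, S subgroups of G × G each containing the diagonal. Then the relation RSR, relating a to d when ∃ b c, (a, b) ∈ R ∧ (b, c) ∈ S ∧ (c, d) ∈ R, is the smallest equivalence relation on G containing both the relation of R and the relation of S; equivalently, it equals the equivalence relation generated by the relation (a, d) ↦ ((a, d) ∈ R ∨ (a, d) ∈ S). -/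
/-! A reflexive subgroup `R ≤ G × G` is an equivalence relation, and any two of them permute:
from `(a, b) ∈ R` and `(b, c) ∈ S` the Mal'cev term `a * b⁻¹ * c` is a middle point for `S` then
`R`. Hence `RSR ∘ RSR = RS(RR)SR = R(SR)SR = RRSSR = RSR`, so `RSR` is an equivalence relation;
it contains `R ∪ S` and is contained in every equivalence relation containing `R ∪ S`. -/

namespace Subgroup

variable {G : Type*} [Group G] {R S : Subgroup (G × G)} {a b c : G}

theorem mem_swap_of_forall_mem_diag (hR : ∀ g : G, (g, g) ∈ R) (h : (a, b) ∈ R) :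
    (b, a) ∈ R := by
  simpa using mul_mem (mul_mem (hR b) (inv_mem h)) (hR a)

theorem mem_trans_of_forall_mem_diag (hR : ∀ g : G, (g, g) ∈ R) (hab : (a, b) ∈ R)
    (hbc : (b, c) ∈ R) : (a, c) ∈ R := by
  simpa using mul_mem (mul_mem hab (inv_mem (hR b))) hbc

theorem exists_mem_mem_of_forall_mem_diag (hR : ∀ g : G, (g, g) ∈ R)
    (hS : ∀ g : G, (g, g) ∈ S) (hab : (a, b) ∈ R) (hbc : (b, c) ∈ S) :
    ∃ x, (a, x) ∈ S ∧ (x, c) ∈ R := by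
  refine ⟨a * b⁻¹ * c, ?_, ?_⟩
  · simpa [mul_assoc] using mul_mem (mul_mem (hS a) (inv_mem (hS b))) hbc
  · simpa [mul_assoc] using mul_mem (mul_mem hab (inv_mem (hR b))) (hR c)

theorem equivalence_comp_comp_of_forall_mem_diag (hR : ∀ g : G, (g, g) ∈ R)
    (hS : ∀ g : G, (g, g) ∈ S) :
    Equivalence fun a d : G => ∃ b c, (a, b) ∈ R ∧ (b, c) ∈ S ∧ (c, d) ∈ R where
  refl a := ⟨a, a, hR a, hS a, hR a⟩
  symm := fun ⟨b, c, hab, hbc, hcd⟩ =>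
    ⟨c, b, mem_swap_of_forall_mem_diag hR hcd, mem_swap_of_forall_mem_diag hS hbc,
      mem_swap_of_forall_mem_diag hR hab⟩
  trans := fun ⟨b, c, hab, hbc, hcd⟩ ⟨e, f, hde, hef, hfg⟩ => by
    obtain ⟨x, hbx, hxe⟩ := exists_mem_mem_of_forall_mem_diag hS hR hbc
      (mem_trans_of_forall_mem_diag hR hcd hde)
    exact ⟨x, f, mem_trans_of_forall_mem_diag hR hab hbx,
      mem_trans_of_forall_mem_diag hS hxe hef, hfg⟩

end Subgroup

/-- For reflexive internal relations `R`, `S` on a group, `RSR` is the join `R ∨ S`: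
it coincides with the equivalence relation generated by `R ∪ S`. -/
theorem subgroup_relations_RSR_eq_join {G : Type*} [Group G]
    (R S : Subgroup (G × G)) (hR : ∀ g : G, (g, g) ∈ R) (hS : ∀ g : G, (g, g) ∈ S) :
    ∀ a d : G, (∃ b c, (a, b) ∈ R ∧ (b, c) ∈ S ∧ (c, d) ∈ R) ↔
      Relation.EqvGen (fun a d => (a, d) ∈ R ∨ (a, d) ∈ S) a d := by
  intro a d
  have hRSR := Subgroup.equivalence_comp_comp_of_forall_mem_diag hR hS
  refine ⟨fun ⟨b, c, hab, hbc, hcd⟩ => ?_, fun h => ?_⟩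
  · exact .trans _ _ _ (.rel _ _ (Or.inl hab))
      (.trans _ _ _ (.rel _ _ (Or.inr hbc)) (.rel _ _ (Or.inl hcd)))
  · refine (hRSR.eqvGen_iff).1 (h.mono fun x y hxy => ?_)
    rcases hxy with hxy | hxy
    · exact ⟨y, y, hxy, hS y, hR y⟩
    · exact ⟨x, y, hR x, hxy, hR y⟩
end

section
/- Let R be a ring, M a module over R, and N₁, N₂, N₃ submodules of M × M each containing the diagonal, with N₁ ⊓ N₂ ≤ N₃. Then the shifting property holds: for all x, y, u, v ∈ M, if (x, y) ∈ N₁, (x, y) ∈ N₃, (x, u) ∈ N₂, (y, v) ∈ N₂ and (u, v) ∈ N₁, then (u, v) ∈ N₃. -/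
/-!
The pair `(u, v) - (x, y)` lies in `N₁`, and it also lies in `N₂` because it differs from
`(y, v) - (x, u)` by the diagonal pair `(u - y, u - y)`. Hence it lies in `N₃`, and adding back
`(x, y) ∈ N₃` gives `(u, v) ∈ N₃`.
-/

namespace AddSubgroup

variable {M : Type*} [AddCommGroup M]

theorem sub_mem_of_mem_of_diag_mem {N : AddSubgroup (M × M)} (hN : ∀ m : M, (m, m) ∈ N)
    {x y u v : M} (hxu : (x, u) ∈ N) (hyv : (y, v) ∈ N) : (u, v) - (x, y) ∈ N := by
  have hdiff : (u, v) - (x, y) = ((y, v) - (x, u)) + (u - y, u - y) := by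
    ext <;> simp only [Prod.fst_sub, Prod.snd_sub, Prod.fst_add, Prod.snd_add] <;> abel
  rw [hdiff]
  exact N.add_mem (N.sub_mem hyv hxu) (hN _)

theorem shifting_of_inf_le {N₁ N₂ N₃ : AddSubgroup (M × M)} (h₂ : ∀ m : M, (m, m) ∈ N₂)
    (hmeet : N₁ ⊓ N₂ ≤ N₃) {x y u v : M} (hxy₁ : (x, y) ∈ N₁) (hxy₃ : (x, y) ∈ N₃)
    (hxu : (x, u) ∈ N₂) (hyv : (y, v) ∈ N₂) (huv : (u, v) ∈ N₁) : (u, v) ∈ N₃ := by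
  have hshift : (u, v) - (x, y) ∈ N₃ :=
    hmeet ⟨N₁.sub_mem huv hxy₁, sub_mem_of_mem_of_diag_mem h₂ hxu hyv⟩
  simpa only [sub_add_cancel] using N₃.add_mem hshift hxy₃

end AddSubgroup

theorem shifting_lemma_submodules_general {R : Type*} [Ring R]
    {M : Type*} [AddCommGroup M] [Module R M]
    (N₁ N₂ N₃ : Submodule R (M × M))
    (h₂ : ∀ m : M, (m, m) ∈ N₂)
    (hmeet : N₁ ⊓ N₂ ≤ N₃) :
    ∀ x y u v : M, (x, y) ∈ N₁ → (x, y) ∈ N₃ → (x, u) ∈ N₂ → (y, v) ∈ N₂ →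
      (u, v) ∈ N₁ → (u, v) ∈ N₃ := fun _ _ _ _ =>
  AddSubgroup.shifting_of_inf_le (N₁ := N₁.toAddSubgroup) (N₂ := N₂.toAddSubgroup)
    (N₃ := N₃.toAddSubgroup) h₂ hmeet

/-- The Shifting Lemma in a category of modules for reflexive internal relations. -/
theorem shifting_lemma_submodules {R : Type*} [Ring R]
    {M : Type*} [AddCommGroup M] [Module R M]
    (N₁ N₂ N₃ : Submodule R (M × M))
    (h₁ : ∀ m : M, (m, m) ∈ N₁) (h₂ : ∀ m : M, (m, m) ∈ N₂) (h₃ : ∀ m : M, (m, m) ∈ N₃)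
    (hmeet : N₁ ⊓ N₂ ≤ N₃) :
    ∀ x y u v : M, (x, y) ∈ N₁ → (x, y) ∈ N₃ → (x, u) ∈ N₂ → (y, v) ∈ N₂ →
      (u, v) ∈ N₁ → (u, v) ∈ N₃ :=
  shifting_lemma_submodules_general N₁ N₂ N₃ h₂ hmeet
end

section
/- Let X be a type and E : X → X → Prop a reflexive relation. Let P := {p : X × X // E p.1 p.2}, and define relations on P by: T' p q := E p.val.1 q.val.2, R' p q := E q.val.1 p.val.2, and K p q := (p.val.2 = q.val.2). Then T', R', K are reflexive relations on P with R' ⊓ K ≤ T', and if the shifting property holds for the triple (R', K, T') on P, then E is symmetric: for all x, y ∈ X, E x y implies E y x. -/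
def ShiftingProp {X : Type*} (R S T : X → X → Prop) : Prop :=
  ∀ x y u v : X, R x y → T x y → S x u → S y v → R u v → T u v

/-- Relational core of Theorem 2, (ii) ⇒ (i): if the Shifting Lemma holds for the
reflexive relations `R'`, `K`, `T'` on `E` (as an object), then the reflexive
relation `E` is symmetric. -/
theorem symm_of_shifting {X : Type*} (E : X → X → Prop) (hE : ∀ x, E x x) :
    let P := {p : X × X // E p.1 p.2}
    let T' : P → P → Prop := fun p q => E p.val.1 q.val.2
    let R' : P → P → Prop := fun p q => E q.val.1 p.val.2
    let K : P → P → Prop := fun p q => p.val.2 = q.val.2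
    (∀ p, T' p p) ∧ (∀ p, R' p p) ∧ (∀ p, K p p) ∧
      (∀ p q, R' p q ∧ K p q → T' p q) ∧
      (ShiftingProp R' K T' → ∀ x y, E x y → E y x) := by
  intro P T' R' K
  refine ⟨fun p => p.2, fun p => p.2, fun _ => rfl, ?_, ?_⟩
  · rintro p q ⟨-, hpq⟩
    show E p.val.1 q.val.2
    exact (show p.val.2 = q.val.2 from hpq) ▸ p.2
  · intro hshift x y hxy
    let diag (z : X) : P := ⟨(z, z), hE z⟩
    -- Shift `T' (x, y) (x, x)` along `K` to the pair `((y, y), (x, x))`, where `T'` reads `E y x`.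
    exact hshift ⟨(x, y), hxy⟩ (diag x) (diag y) (diag x) hxy (hE x) rfl rfl hxy
end
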